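/- Let n ≥ 1, let S ⊆ ZMod n generate the additive group ZMod n, and suppose Cay(ZMod n, S) is arc-transitive. Then the translation subgroup T̂ is normal in Aut(Cay(ZMod n, S)) if and only if T̂ is the unique regular cyclic subgroup of Aut(Cay(ZMod n, S)), i.e., every cyclic subgroup of Aut(Cay(ZMod n, S)) that is regular on the vertices equals T̂. -/

import Mathlib

/-- A permutation `e` is an automorphism of the digraph with adjacency `Adj`. -/
def IsDigraphAut {V : Type*} (Adj : V → V → Prop) (e : Equiv.Perm V) : Prop :=
  ∀ x y, Adj x y ↔ Adj (e x) (e y)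

/-- The automorphism group of a digraph, as a subgroup of the permutation group. -/
def autGroup {V : Type*} (Adj : V → V → Prop) : Subgroup (Equiv.Perm V) where
  carrier := {e | IsDigraphAut Adj e}
  one_mem' := by intro x y; exact Iff.rfl
  mul_mem' := by
    intro a b ha hb x y
    exact (hb x y).trans (ha (b x) (b y))
  inv_mem' := by
    intro a ha x y
    simpa using (ha (a⁻¹ x) (a⁻¹ y)).symm

/-- A digraph is arc-transitive if its automorphism group is transitive on arcs. -/
def ArcTransitive {V : Type*} (Adj : V → V → Prop) : Prop :=
  ∀ x y u v, Adj x y → Adj u v → ∃ e ∈ autGroup Adj, e x = u ∧ e y = v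

/-- A subgroup of the permutation group of `V` is regular on `V`. -/
def IsRegularSub {V : Type*} (H : Subgroup (Equiv.Perm V)) : Prop :=
  ∀ u v : V, ∃! h : H, (h : Equiv.Perm V) u = v

/-- A circulant: the automorphism group contains a regular cyclic subgroup. -/
def IsCirculant {V : Type*} (Adj : V → V → Prop) : Prop :=
  ∃ H : Subgroup (Equiv.Perm V), H ≤ autGroup Adj ∧ IsCyclic H ∧ IsRegularSub H

/-- A normal circulant: the automorphism group contains a regular cyclic subgroup
that is normal in the automorphism group. -/
def IsNormalCirculant {V : Type*} (Adj : V → V → Prop) : Prop :=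
  ∃ H : Subgroup (Equiv.Perm V), H ≤ autGroup Adj ∧ IsCyclic H ∧ IsRegularSub H ∧
    ∀ e ∈ autGroup Adj, ∀ h ∈ H, e * h * e⁻¹ ∈ H

/-- Tensor (direct) product of digraphs. -/
def tensorAdj {V₁ V₂ : Type*} (Adj₁ : V₁ → V₁ → Prop) (Adj₂ : V₂ → V₂ → Prop) :
    V₁ × V₂ → V₁ × V₂ → Prop :=
  fun p q => Adj₁ p.1 q.1 ∧ Adj₂ p.2 q.2

/-- Lexicographic product `Γ[Kbar_b]` with the edgeless digraph on `b` vertices. -/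
def lexAdj {V : Type*} (Adj : V → V → Prop) (b : ℕ) : V × Fin b → V × Fin b → Prop :=
  fun p q => Adj p.1 q.1

/-- Digraph isomorphism. -/
def DigraphIso {V₁ V₂ : Type*} (Adj₁ : V₁ → V₁ → Prop) (Adj₂ : V₂ → V₂ → Prop) : Prop :=
  ∃ e : V₁ ≃ V₂, ∀ x y, Adj₁ x y ↔ Adj₂ (e x) (e y)

/-- Connectedness: the reflexive–symmetric–transitive closure of adjacency
relates every pair of vertices. -/
def DigraphConnected {V : Type*} (Adj : V → V → Prop) : Prop :=
  ∀ u v : V, Relation.ReflTransGen (fun a b => Adj a b ∨ Adj b a) u v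

/-- R-thick digraph: two distinct vertices with the same in- and out-neighbourhoods. -/
def RThick {V : Type*} (Adj : V → V → Prop) : Prop :=
  ∃ u v : V, u ≠ v ∧ (∀ w, Adj u w ↔ Adj v w) ∧ (∀ w, Adj w u ↔ Adj w v)

/-- The directed 4-cycle on `ZMod 4`. -/
def C4Adj : ZMod 4 → ZMod 4 → Prop := fun x y => y - x = 1 ∨ y - x = 3

/-- Cayley digraph of a group `G` with connection set `S`. -/
def cayAdj (G : Type*) [Group G] (S : Set G) : G → G → Prop :=
  fun x y => y * x⁻¹ ∈ S

/-- The right-regular representation of `G` inside `Equiv.Perm G`. -/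
def rightReg (G : Type*) [Group G] : Subgroup (Equiv.Perm G) where
  carrier := {e | ∃ g : G, ∀ x, e x = x * g}
  one_mem' := ⟨1, by simp⟩
  mul_mem' := by
    rintro a b ⟨g, hg⟩ ⟨h, hh⟩
    exact ⟨h * g, fun x => by simp [Equiv.Perm.mul_apply, hh, hg, mul_assoc]⟩
  inv_mem' := by
    rintro a ⟨g, hg⟩
    refine ⟨g⁻¹, fun x => a.injective ?_⟩
    rw [show ∀ y, a (a⁻¹ y) = y from fun y => (Equiv.eq_symm_apply a).mp rfl, hg]
    simp

/-- Cayley digraph of `ZMod n` with connection set `S`. -/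
def zcayAdj (n : ℕ) (S : Set (ZMod n)) : ZMod n → ZMod n → Prop :=
  fun x y => y - x ∈ S

/-- The translation subgroup of `Equiv.Perm (ZMod n)`. -/
def transSub (n : ℕ) : Subgroup (Equiv.Perm (ZMod n)) where
  carrier := {e | ∃ g : ZMod n, ∀ x, e x = x + g}
  one_mem' := ⟨0, by simp⟩
  mul_mem' := by
    rintro a b ⟨g, hg⟩ ⟨h, hh⟩
    exact ⟨h + g, fun x => by simp [Equiv.Perm.mul_apply, hh, hg, add_assoc]⟩
  inv_mem' := by
    rintro a ⟨g, hg⟩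
    refine ⟨-g, fun x => a.injective ?_⟩
    rw [show ∀ y, a (a⁻¹ y) = y from fun y => (Equiv.eq_symm_apply a).mp rfl, hg]
    simp

/-!
If the translations are normal in `A = Aut(Cay(ZMod n, S))`, every automorphism is affine,
`x ↦ w * x + c` with `w` a unit, so a regular cyclic subgroup is generated by some
`h x = m * x + b`. Regularity makes the orbit `(1 + m + ⋯ + m ^ (k - 1)) * b` of `0` exhaust
`ZMod n`, so the powers of `m` exhaust `1 + (m - 1) * ZMod n`. Arc-transitivity makes every
element of `S` a unit, and then `m * S ⊆ S` turns `S` into a union of cosets of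
`(m - 1) * ZMod n`. If `m ≠ 1`, the transposition of `0` and `m - 1` is therefore an
automorphism; being affine forces `m - 1 = 2` and `4 = 0`, and then `h` is an involution, which
cannot be regular. So `m = 1` and the subgroup consists of translations.

Conversely, the conjugate of the translation subgroup by an automorphism is again a regular
cyclic subgroup of `A`, hence equal to it.
-/

open Equiv Finset

section Regular

variable {V : Type*}

theorem IsRegularSub.eq_of_le [Nonempty V] {H K : Subgroup (Perm V)} (hH : IsRegularSub H)
    (hK : IsRegularSub K) (hle : H ≤ K) : H = K := by
  refine le_antisymm hle fun p hp => ?_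
  obtain ⟨v⟩ := ‹Nonempty V›
  obtain ⟨η, hη, -⟩ := hH v (p v)
  have hηp : (η : Perm V) = p :=
    congrArg Subtype.val ((hK v (p v)).unique (y₁ := ⟨η, hle η.2⟩) (y₂ := ⟨p, hp⟩) hη rfl)
  exact hηp ▸ η.2

theorem IsRegularSub.map_conj {H : Subgroup (Perm V)} (hH : IsRegularSub H) (e : Perm V) :
    IsRegularSub (H.map (MulAut.conj e).toMonoidHom) := by
  intro u v
  obtain ⟨⟨τ, hτ⟩, hτuv, huniq⟩ := hH (e⁻¹ u) (e⁻¹ v)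
  refine ⟨⟨e * τ * e⁻¹, τ, hτ, rfl⟩, by simp_all [Perm.mul_apply], ?_⟩
  rintro ⟨_, σ, hσ, rfl⟩ hσuv
  have hσ' : σ (e⁻¹ u) = e⁻¹ v := by
    simp only [MulEquiv.toMonoidHom_eq_coe, MonoidHom.coe_coe, MulAut.conj_apply,
      Perm.mul_apply] at hσuv
    rw [← hσuv, Perm.inv_def, symm_apply_apply]
  have := huniq ⟨σ, hσ⟩ hσ'
  simp_all

theorem IsRegularSub.exists_pow_apply_eq [Finite V] {g : Perm V}
    (hg : IsRegularSub (Subgroup.zpowers g)) (u v : V) : ∃ k : ℕ, (g ^ k) u = v := by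
  obtain ⟨⟨η, hη⟩, hηuv, -⟩ := hg u v
  obtain ⟨k, rfl⟩ := mem_powers_iff_mem_zpowers.2 hη
  exact ⟨k, hηuv⟩

theorem normalizes_of_forall_regular_cyclic_eq {A N : Subgroup (Perm V)} (hNA : N ≤ A)
    (hcyc : IsCyclic N) (hreg : IsRegularSub N)
    (huniq : ∀ H : Subgroup (Perm V), H ≤ A → IsCyclic H → IsRegularSub H → H = N) :
    ∀ e ∈ A, ∀ t ∈ N, e * t * e⁻¹ ∈ N := by
  intro e he t ht
  let f := (MulAut.conj e).toMonoidHom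
  have hmapA : N.map f ≤ A := Subgroup.map_le_iff_le_comap.2 fun t ht =>
    mul_mem (mul_mem he (hNA ht)) (inv_mem he)
  have hmap := huniq _ hmapA (isCyclic_of_surjective _ (f.subgroupMap_surjective N))
    (hreg.map_conj e)
  exact hmap ▸ Subgroup.mem_map_of_mem f ht

theorem pow_apply_eq_or_of_apply_apply_eq {h : Perm V} {a : V} (hinv : h (h a) = a) (k : ℕ) :
    (h ^ k) a = a ∨ (h ^ k) a = h a := by
  induction k with
  | zero => simp
  | succ k ih =>
    rw [pow_succ', Perm.mul_apply]
    rcases ih with hk | hk <;> simp [hk, hinv]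

end Regular

section Affine

variable {R : Type*} [CommRing R] {h : Perm R} {m b : R}

theorem affine_pow_apply_zero (hh : ∀ x, h x = m * x + b) (k : ℕ) :
    (h ^ k) 0 = (∑ i ∈ range k, m ^ i) * b := by
  induction k with
  | zero => simp
  | succ k ih => rw [pow_succ', Perm.mul_apply, ih, hh, geom_sum_succ]; ring

theorem exists_pow_eq_one_add_mul (hh : ∀ x, h x = m * x + b)
    (horbit : ∀ v, ∃ k : ℕ, (h ^ k) 0 = v) (x : R) : ∃ k : ℕ, m ^ k = 1 + (m - 1) * x := by
  obtain ⟨k₁, hk₁⟩ := horbit 1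
  have hb : IsUnit b := .of_mul_eq_one_right _ ((affine_pow_apply_zero hh k₁).symm.trans hk₁)
  obtain ⟨k, hk⟩ := horbit (x * b)
  have hσ : ∑ i ∈ range k, m ^ i = x :=
    hb.mul_right_cancel ((affine_pow_apply_zero hh k).symm.trans hk)
  exact ⟨k, by linear_combination -(geom_sum_mul m k) + (m - 1) * hσ⟩

theorem not_isUnit_sub_one [Nontrivial R] (hm : IsUnit m)
    (hpow : ∀ x, ∃ k : ℕ, m ^ k = 1 + (m - 1) * x) : ¬IsUnit (m - 1) := by
  rintro ⟨u, hu⟩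
  obtain ⟨k, hk⟩ := hpow (-↑u⁻¹)
  have hzero : m ^ k = 0 := by rw [hk, ← hu]; simp
  exact not_isUnit_zero (hzero ▸ hm.pow k)

theorem add_mem_of_dvd_sub_one {S : Set R} (hmS : ∀ s ∈ S, m * s ∈ S)
    (hunit : ∀ s ∈ S, IsUnit s) (hpow : ∀ x, ∃ k : ℕ, m ^ k = 1 + (m - 1) * x)
    {s : R} (hs : s ∈ S) {c : R} (hc : m - 1 ∣ c) : s + c ∈ S := by
  have hpowS : ∀ j : ℕ, m ^ j * s ∈ S := by
    intro j
    induction j with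
    | zero => simpa using hs
    | succ j ih => simpa [pow_succ', mul_assoc] using hmS _ ih
  obtain ⟨t, rfl⟩ := hc
  obtain ⟨u, rfl⟩ := hunit s hs
  obtain ⟨j, hj⟩ := hpow (t * ↑u⁻¹)
  have hsc : ↑u + (m - 1) * t = m ^ j * ↑u := by
    rw [hj]; linear_combination (-(m - 1) * t) * u.inv_mul
  exact hsc ▸ hpowS j

end Affine

section Cayley

variable {n : ℕ} {S : Set (ZMod n)}

theorem addRight_mem_transSub (g : ZMod n) : Equiv.addRight g ∈ transSub n :=
  ⟨g, fun _ => rfl⟩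

theorem transSub_le_autGroup : transSub n ≤ autGroup (zcayAdj n S) := by
  rintro e ⟨g, hg⟩ x y
  simp [zcayAdj, hg]

theorem isRegularSub_transSub : IsRegularSub (transSub n) := by
  intro u v
  refine ⟨⟨_, addRight_mem_transSub (v - u)⟩, by simp, ?_⟩
  rintro ⟨p, g, hg⟩ hp
  have hgu : g = v - u := by simp only [hg] at hp; rw [← hp]; ring
  ext x
  simp [hg, hgu]

theorem addRight_one_pow_apply (k : ℕ) (x : ZMod n) :
    (Equiv.addRight (1 : ZMod n) ^ k) x = x + k := by
  induction k with
  | zero => simp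
  | succ k ih => rw [pow_succ', Perm.mul_apply, ih, coe_addRight]; push_cast; ring

theorem transSub_eq_zpowers [NeZero n] : transSub n = Subgroup.zpowers (Equiv.addRight 1) := by
  refine le_antisymm (fun p ⟨g, hg⟩ => ?_) ((Subgroup.zpowers_le).2 (addRight_mem_transSub 1))
  have hp : p = Equiv.addRight 1 ^ g.val := by
    ext x
    rw [hg, addRight_one_pow_apply, ZMod.natCast_zmod_val]
  exact hp ▸ Subgroup.npow_mem_zpowers _ _

theorem isCyclic_transSub [NeZero n] : IsCyclic (transSub n) := by
  rw [transSub_eq_zpowers]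
  infer_instance

theorem mem_autGroup_of_dvd_sub {r : ZMod n} (hS : ∀ s ∈ S, ∀ c, r ∣ c → s + c ∈ S)
    {e : Perm (ZMod n)} (he : ∀ x, r ∣ e x - x) : e ∈ autGroup (zcayAdj n S) := by
  intro x y
  show y - x ∈ S ↔ e y - e x ∈ S
  have hd : r ∣ (e y - e x) - (y - x) := by
    convert dvd_sub (he y) (he x) using 1
    ring
  constructor
  · intro hxy
    simpa using hS _ hxy _ hd
  · intro hxy
    simpa using hS _ hxy _ (dvd_neg.2 hd)

theorem mul_mem_of_mem_autGroup {e : Perm (ZMod n)} (he : e ∈ autGroup (zcayAdj n S))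
    {w : ZMod n} (hw : ∀ x, e x = w * x + e 0) {s : ZMod n} (hs : s ∈ S) : w * s ∈ S := by
  have := (he 0 s).1 (by simpa [zcayAdj] using hs)
  simpa [zcayAdj, hw s] using this

theorem eq_two_of_swap_eq_affine {r u : ZMod n} (hr0 : r ≠ 0) (hr : ¬IsUnit r)
    (hu : ∀ x, swap 0 r x = u * x + r) : r = 2 ∧ (4 : ZMod n) = 0 := by
  have : Nontrivial (ZMod n) := nontrivial_of_ne r 0 hr0
  have h1r : (1 : ZMod n) ≠ r := fun h => hr (h ▸ isUnit_one)
  have hu1 : u = 1 - r := by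
    have := hu 1
    rw [swap_apply_of_ne_of_ne one_ne_zero h1r] at this
    linear_combination -this
  have hfix : ∀ x, x ≠ 0 → x ≠ r → r * (1 - x) = 0 := by
    intro x hx0 hxr
    have := hu x
    rw [swap_apply_of_ne_of_ne hx0 hxr, hu1] at this
    linear_combination -this
  have h2r : 2 * r = 0 := by
    have := hfix (-1) (neg_ne_zero.2 one_ne_zero) fun h => hr (h ▸ isUnit_one.neg)
    linear_combination this
  have h2 : (2 : ZMod n) = r := by
    by_contra h2r'
    by_cases h20 : (2 : ZMod n) = 0
    · have hn : n ∣ 2 := (ZMod.natCast_eq_zero_iff 2 n).1 (by exact_mod_cast h20)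
      have hn2 : n ≤ 2 := Nat.le_of_dvd two_pos hn
      interval_cases n
      · exact absurd hn (by norm_num)
      · exact hr0 (Subsingleton.elim _ _)
      · exact hr (((by decide : ∀ x : ZMod 2, x ≠ 0 → x = 1) r hr0) ▸ isUnit_one)
    · exact hr0 (by linear_combination -hfix 2 h20 h2r')
  exact ⟨h2.symm, by linear_combination 2 * h2 + h2r⟩

end Cayley

section Normal

variable {n : ℕ} [NeZero n] {S : Set (ZMod n)}
  (hnorm : ∀ e ∈ autGroup (zcayAdj n S), ∀ h ∈ transSub n, e * h * e⁻¹ ∈ transSub n)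
include hnorm

theorem exists_affine_of_normal {e : Perm (ZMod n)} (he : e ∈ autGroup (zcayAdj n S)) :
    ∃ w : ZMod n, IsUnit w ∧ ∀ x, e x = w * x + e 0 := by
  obtain ⟨w, hw⟩ := hnorm e he _ (addRight_mem_transSub 1)
  have hstep : ∀ y, e (y + 1) = e y + w := fun y => by
    simpa [Perm.mul_apply] using hw (e y)
  have hnat : ∀ k : ℕ, e k = w * k + e 0 := by
    intro k
    induction k with
    | zero => simp
    | succ k ih => push_cast; rw [hstep, ih]; ring
  have hall : ∀ x, e x = w * x + e 0 := fun x => by simpa using hnat x.val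
  refine ⟨w, .of_mul_eq_one (e.symm (1 + e 0)) ?_, hall⟩
  have := hall (e.symm (1 + e 0))
  rw [apply_symm_apply] at this
  linear_combination -this

theorem isUnit_of_mem_of_normal (hgen : AddSubgroup.closure S = ⊤)
    (hat : ArcTransitive (zcayAdj n S)) {s : ZMod n} (hs : s ∈ S) : IsUnit s := by
  have hspan : S ⊆ (Ideal.span {s} : Set (ZMod n)) := by
    intro s' hs'
    obtain ⟨e, he, he0, hes⟩ := hat 0 s 0 s' (by simpa [zcayAdj]) (by simpa [zcayAdj])
    obtain ⟨w, -, hw⟩ := exists_affine_of_normal hnorm he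
    exact Ideal.mem_span_singleton'.2 ⟨w, by rw [← hes, hw, he0, add_zero]⟩
  have h1 : (1 : ZMod n) ∈ Ideal.span {s} := by
    have := (AddSubgroup.closure_le (K := (Ideal.span {s}).toAddSubgroup)).2 hspan
    rw [hgen] at this
    exact this trivial
  exact isUnit_of_dvd_one (Ideal.mem_span_singleton.1 h1)

theorem slope_eq_one_of_normal (hgen : AddSubgroup.closure S = ⊤)
    (hat : ArcTransitive (zcayAdj n S)) {h : Perm (ZMod n)} (hhA : h ∈ autGroup (zcayAdj n S))
    {m : ZMod n} (hm : IsUnit m) (hh : ∀ x, h x = m * x + h 0)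
    (horbit : ∀ v, ∃ k : ℕ, (h ^ k) 0 = v) : m = 1 := by
  by_contra hm1
  have : Nontrivial (ZMod n) := nontrivial_of_ne m 1 hm1
  have hpow := exists_pow_eq_one_add_mul hh horbit
  have hS : ∀ s ∈ S, ∀ c, m - 1 ∣ c → s + c ∈ S := fun s hs c hc =>
    add_mem_of_dvd_sub_one (fun _ => mul_mem_of_mem_autGroup hhA hh)
      (fun _ => isUnit_of_mem_of_normal hnorm hgen hat) hpow hs hc
  have hswap : swap 0 (m - 1) ∈ autGroup (zcayAdj n S) := by
    refine mem_autGroup_of_dvd_sub hS fun x => ?_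
    rw [swap_apply_def]
    split_ifs with hx0 hx1
    · simp [hx0]
    · rw [hx1, zero_sub]
      exact dvd_neg.2 dvd_rfl
    · simp
  obtain ⟨u, -, hu⟩ := exists_affine_of_normal hnorm hswap
  obtain ⟨h2, h4⟩ := eq_two_of_swap_eq_affine (sub_ne_zero.2 hm1)
    (not_isUnit_sub_one hm hpow) (by simpa using hu)
  -- `h x = 3 * x + h 0` with `4 = 0`, so `h` swaps `0` and `h 0`
  have hinv : h (h 0) = 0 := by
    rw [hh (h 0)]
    linear_combination (h 0) * h2 + (h 0) * h4
  have hmem : ∀ v, v = 0 ∨ v = h 0 := fun v => by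
    obtain ⟨k, rfl⟩ := horbit v
    exact pow_apply_eq_or_of_apply_apply_eq hinv k
  rcases hmem 1 with h1 | h1
  · exact one_ne_zero h1
  rcases hmem (m - 1) with hr | hr
  · exact sub_ne_zero.2 hm1 hr
  · exact not_isUnit_sub_one hm hpow ((h1.trans hr.symm) ▸ isUnit_one)

theorem eq_transSub_of_normal (hgen : AddSubgroup.closure S = ⊤)
    (hat : ArcTransitive (zcayAdj n S)) {H : Subgroup (Perm (ZMod n))}
    (hHA : H ≤ autGroup (zcayAdj n S)) (hcyc : IsCyclic H) (hreg : IsRegularSub H) :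
    H = transSub n := by
  obtain ⟨g, rfl⟩ := (Subgroup.isCyclic_iff_exists_zpowers_eq_top H).1 hcyc
  have hgA := hHA (Subgroup.mem_zpowers g)
  obtain ⟨m, hm, hg⟩ := exists_affine_of_normal hnorm hgA
  have hm1 : m = 1 :=
    slope_eq_one_of_normal hnorm hgen hat hgA hm hg (hreg.exists_pow_apply_eq 0)
  have hgT : g ∈ transSub n := ⟨g 0, fun x => by rw [hg, hm1, one_mul]⟩
  exact hreg.eq_of_le isRegularSub_transSub ((Subgroup.zpowers_le).2 hgT)

end Normal

theorem stmt9 (n : ℕ) (hn : 1 ≤ n) (S : Set (ZMod n))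
    (hgen : AddSubgroup.closure S = ⊤)
    (hat : ArcTransitive (zcayAdj n S)) :
    (∀ e ∈ autGroup (zcayAdj n S), ∀ h ∈ transSub n, e * h * e⁻¹ ∈ transSub n) ↔
    (∀ H : Subgroup (Equiv.Perm (ZMod n)), H ≤ autGroup (zcayAdj n S) →
      IsCyclic H → IsRegularSub H → H = transSub n) := by
  have : NeZero n := ⟨by omega⟩
  exact ⟨fun hnorm _ => eq_transSub_of_normal hnorm hgen hat,
    normalizes_of_forall_regular_cyclic_eq transSub_le_autGroup isCyclic_transSub
      isRegularSub_transSub⟩
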